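/- arXiv:1603.09609 — 2 statements merged into one kernel-verified Lean document; each statement's English description precedes it below -/
import Mathlib

section
/- Strong TRO equivalence of operator spaces is transitive: if X = cl span(M₂ Y M₁*), Y = cl span(M₂* X M₁) = cl span(N₂ Z N₁*), and Z = cl span(N₂* Y N₁) for TROs Mᵢ, Nᵢ (i=1,2), then X = cl span(L₂ Z L₁*) and Z = cl span(L₂* X L₁), where Lᵢ = cl span(Mᵢ Dᵢ Nᵢ) and Dᵢ is the C*-algebra generated by Mᵢ* Mᵢ ∪ Nᵢ Nᵢ*. -/
noncomputable section
open ContinuousLinearMap Filter Topology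

/-- Closed linear span of a set. -/
def clSpan {E : Type*} [NormedAddCommGroup E] [NormedSpace ℂ E] (S : Set E) : Set E :=
  closure (Submodule.span ℂ S : Set E)

/-- Set of products of operators from two sets. -/
def setMul {H₁ H₂ H₃ : Type*} [NormedAddCommGroup H₁] [NormedSpace ℂ H₁]
    [NormedAddCommGroup H₂] [NormedSpace ℂ H₂] [NormedAddCommGroup H₃] [NormedSpace ℂ H₃]
    (S : Set (H₂ →L[ℂ] H₃)) (T : Set (H₁ →L[ℂ] H₂)) : Set (H₁ →L[ℂ] H₃) :=
  {x | ∃ s ∈ S, ∃ t ∈ T, x = s.comp t}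

/-- Set of adjoints. -/
def adjSet {H K : Type*} [NormedAddCommGroup H] [InnerProductSpace ℂ H] [CompleteSpace H]
    [NormedAddCommGroup K] [InnerProductSpace ℂ K] [CompleteSpace K]
    (S : Set (H →L[ℂ] K)) : Set (K →L[ℂ] H) :=
  {x | ∃ s ∈ S, x = ContinuousLinearMap.adjoint s}

/-- A ternary ring of operators: a norm-closed subspace `M ⊆ B(H,K)` with `M M* M ⊆ M`. -/
structure IsTRO {H K : Type*} [NormedAddCommGroup H] [InnerProductSpace ℂ H] [CompleteSpace H]
    [NormedAddCommGroup K] [InnerProductSpace ℂ K] [CompleteSpace K]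
    (M : Set (H →L[ℂ] K)) : Prop where
  isClosed : IsClosed M
  zero_mem : (0 : H →L[ℂ] K) ∈ M
  add_mem : ∀ x ∈ M, ∀ y ∈ M, x + y ∈ M
  smul_mem : ∀ (c : ℂ), ∀ x ∈ M, c • x ∈ M
  ternary : ∀ x ∈ M, ∀ y ∈ M, ∀ z ∈ M,
    x.comp ((ContinuousLinearMap.adjoint y).comp z) ∈ M

/-- A (concrete) operator space: a norm-closed linear subspace of `B(H,K)`. -/
def IsOperatorSpace {H K : Type*} [NormedAddCommGroup H] [NormedSpace ℂ H]
    [NormedAddCommGroup K] [NormedSpace ℂ K] (X : Set (H →L[ℂ] K)) : Prop :=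
  IsClosed X ∧ ∃ p : Submodule ℂ (H →L[ℂ] K), X = ↑p

/-! Under `clSpan`, products of sets of operators associate freely, and any factor may be
replaced by a set with the same closed span. Hence `L₂ Z L₁*` has the closed span of
`M₂ D₂ (N₂ Z N₁*) D₁ M₁*`, i.e. of `M₂ (D₂ Y D₁) M₁*`, and everything reduces to
`cl span(D₂ Y D₁) = Y`. The inclusion `⊇` holds because `Y = cl span(M₂* M₂ Y M₁* M₁)`. For `⊆`,
reading `Y` as `cl span(M₂* X M₁)` and as `cl span(N₂ Z N₁*)`, the ternary relations show that `Y`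
is a left module over the self-adjoint set `M₂* M₂ ∪ N₂ N₂*` and a right module over
`M₁* M₁ ∪ N₁ N₁*`; the operators multiplying the closed subspace `Y` into itself form a closed
subalgebra, which therefore contains the C*-algebra these sets generate. -/

local infixl:70 " ⬝ " => setMul

section ClosedSpan

variable {E F : Type*} [NormedAddCommGroup E] [NormedSpace ℂ E]
  [NormedAddCommGroup F] [NormedSpace ℂ F]

lemma isClosed_clSpan (S : Set E) : IsClosed (clSpan S) := isClosed_closure

lemma subset_clSpan (S : Set E) : S ⊆ clSpan S :=
  Submodule.subset_span.trans subset_closure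

lemma clSpan_mono {S T : Set E} (h : S ⊆ T) : clSpan S ⊆ clSpan T :=
  closure_mono (Submodule.span_mono h)

lemma mapsTo_clSpan (f : E →L[ℂ] F) {S : Set E} {T : Set F} (h : Set.MapsTo f S (clSpan T)) :
    Set.MapsTo f (clSpan S) (clSpan T) :=
  closure_minimal
    (Submodule.span_le (p := ((Submodule.span ℂ T).topologicalClosure).comap f.toLinearMap).2 h)
    ((isClosed_clSpan T).preimage f.continuous)

lemma clSpan_subset {S T : Set E} (h : S ⊆ clSpan T) : clSpan S ⊆ clSpan T :=
  mapsTo_clSpan (ContinuousLinearMap.id ℂ E) h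

@[simp]
lemma clSpan_clSpan (S : Set E) : clSpan (clSpan S) = clSpan S :=
  (clSpan_subset subset_rfl).antisymm (clSpan_mono (subset_clSpan S))

end ClosedSpan

lemma isOperatorSpace_clSpan {H K : Type*} [NormedAddCommGroup H] [NormedSpace ℂ H]
    [NormedAddCommGroup K] [NormedSpace ℂ K] (S : Set (H →L[ℂ] K)) :
    IsOperatorSpace (clSpan S) :=
  ⟨isClosed_clSpan S, (Submodule.span ℂ S).topologicalClosure, rfl⟩

lemma IsOperatorSpace.clSpan_eq {H K : Type*} [NormedAddCommGroup H] [NormedSpace ℂ H]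
    [NormedAddCommGroup K] [NormedSpace ℂ K] {Y : Set (H →L[ℂ] K)} (hY : IsOperatorSpace Y) :
    clSpan Y = Y := by
  obtain ⟨hclosed, p, rfl⟩ := hY
  rw [clSpan, Submodule.span_eq, hclosed.closure_eq]

section SetMul

variable {H₁ H₂ H₃ H₄ : Type*}
  [NormedAddCommGroup H₁] [NormedSpace ℂ H₁] [NormedAddCommGroup H₂] [NormedSpace ℂ H₂]
  [NormedAddCommGroup H₃] [NormedSpace ℂ H₃] [NormedAddCommGroup H₄] [NormedSpace ℂ H₄]

lemma setMul_eq_image2 (A : Set (H₂ →L[ℂ] H₃)) (B : Set (H₁ →L[ℂ] H₂)) :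
    A ⬝ B = Set.image2 comp A B := by
  ext
  simp [setMul, eq_comm]

lemma setMul_assoc (A : Set (H₃ →L[ℂ] H₄)) (B : Set (H₂ →L[ℂ] H₃)) (C : Set (H₁ →L[ℂ] H₂)) :
    A ⬝ B ⬝ C = A ⬝ (B ⬝ C) := by
  simp only [setMul_eq_image2]
  exact Set.image2_assoc fun _ _ _ => comp_assoc _ _ _

lemma setMul_mono {A A' : Set (H₂ →L[ℂ] H₃)} {B B' : Set (H₁ →L[ℂ] H₂)}
    (hA : A ⊆ A') (hB : B ⊆ B') : A ⬝ B ⊆ A' ⬝ B' := by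
  simpa only [setMul_eq_image2] using Set.image2_subset hA hB

lemma union_setMul (A A' : Set (H₂ →L[ℂ] H₃)) (B : Set (H₁ →L[ℂ] H₂)) :
    (A ∪ A') ⬝ B = A ⬝ B ∪ A' ⬝ B := by
  simp only [setMul_eq_image2, Set.image2_union_left]

lemma setMul_union (A : Set (H₂ →L[ℂ] H₃)) (B B' : Set (H₁ →L[ℂ] H₂)) :
    A ⬝ (B ∪ B') = A ⬝ B ∪ A ⬝ B' := by
  simp only [setMul_eq_image2, Set.image2_union_right]

@[simp]
lemma clSpan_clSpan_setMul (S : Set (H₂ →L[ℂ] H₃)) (T : Set (H₁ →L[ℂ] H₂)) :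
    clSpan (clSpan S ⬝ T) = clSpan (S ⬝ T) := by
  refine (clSpan_subset ?_).antisymm (clSpan_mono (setMul_mono (subset_clSpan S) subset_rfl))
  rintro _ ⟨s, hs, t, ht, rfl⟩
  exact mapsTo_clSpan ((compL ℂ H₁ H₂ H₃).flip t)
    (fun s hs => subset_clSpan (S ⬝ T) ⟨s, hs, t, ht, rfl⟩) hs

@[simp]
lemma clSpan_setMul_clSpan (S : Set (H₂ →L[ℂ] H₃)) (T : Set (H₁ →L[ℂ] H₂)) :
    clSpan (S ⬝ clSpan T) = clSpan (S ⬝ T) := by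
  refine (clSpan_subset ?_).antisymm (clSpan_mono (setMul_mono subset_rfl (subset_clSpan T)))
  rintro _ ⟨s, hs, t, ht, rfl⟩
  exact mapsTo_clSpan (compL ℂ H₁ H₂ H₃ s)
    (fun t ht => subset_clSpan (S ⬝ T) ⟨s, hs, t, ht, rfl⟩) ht

lemma clSpan_setMul_congr {S S' : Set (H₂ →L[ℂ] H₃)} {T T' : Set (H₁ →L[ℂ] H₂)}
    (hS : clSpan S = clSpan S') (hT : clSpan T = clSpan T') :
    clSpan (S ⬝ T) = clSpan (S' ⬝ T') := by
  rw [← clSpan_clSpan_setMul, hS, clSpan_clSpan_setMul, ← clSpan_setMul_clSpan, hT,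
    clSpan_setMul_clSpan]

end SetMul

section Sandwich

variable {H₁ H₂ H₃ H₄ H₅ H₆ : Type*}
  [NormedAddCommGroup H₁] [NormedSpace ℂ H₁] [NormedAddCommGroup H₂] [NormedSpace ℂ H₂]
  [NormedAddCommGroup H₃] [NormedSpace ℂ H₃] [NormedAddCommGroup H₄] [NormedSpace ℂ H₄]
  [NormedAddCommGroup H₅] [NormedSpace ℂ H₅] [NormedAddCommGroup H₆] [NormedSpace ℂ H₆]

lemma clSpan_setMul_setMul_of_eq {A : Set (H₄ →L[ℂ] H₅)} {B : Set (H₃ →L[ℂ] H₄)}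
    {C : Set (H₂ →L[ℂ] H₃)} {Y : Set (H₂ →L[ℂ] H₅)} (hY : Y = clSpan (A ⬝ B ⬝ C))
    (P : Set (H₅ →L[ℂ] H₆)) (Q : Set (H₁ →L[ℂ] H₂)) :
    clSpan (P ⬝ Y ⬝ Q) = clSpan (P ⬝ A ⬝ B ⬝ (C ⬝ Q)) := by
  have hY' : clSpan Y = clSpan (A ⬝ B ⬝ C) := by rw [hY, clSpan_clSpan]
  rw [clSpan_setMul_congr (clSpan_setMul_congr rfl hY') rfl]
  simp only [setMul_assoc]

lemma setMul_subset_of_eq_clSpan_left {A : Set (H₄ →L[ℂ] H₅)} {B : Set (H₃ →L[ℂ] H₄)}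
    {C : Set (H₂ →L[ℂ] H₃)} {Y : Set (H₂ →L[ℂ] H₅)} (hY : Y = clSpan (A ⬝ B ⬝ C))
    {G : Set (H₅ →L[ℂ] H₅)} (hG : G ⬝ A ⊆ A) : G ⬝ Y ⊆ Y := by
  rintro _ ⟨g, hg, y, hy, rfl⟩
  rw [hY] at hy ⊢
  refine mapsTo_clSpan (compL ℂ H₂ H₅ H₅ g) ?_ hy
  rintro _ ⟨_, ⟨a, ha, b, hb, rfl⟩, c, hc, rfl⟩
  rw [compL_apply, ← comp_assoc, ← comp_assoc]
  exact subset_clSpan (A ⬝ B ⬝ C)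
    ⟨_, ⟨g.comp a, hG ⟨g, hg, a, ha, rfl⟩, b, hb, rfl⟩, c, hc, rfl⟩

lemma setMul_subset_of_eq_clSpan_right {A : Set (H₄ →L[ℂ] H₅)} {B : Set (H₃ →L[ℂ] H₄)}
    {C : Set (H₂ →L[ℂ] H₃)} {Y : Set (H₂ →L[ℂ] H₅)} (hY : Y = clSpan (A ⬝ B ⬝ C))
    {G : Set (H₂ →L[ℂ] H₂)} (hG : C ⬝ G ⊆ C) : Y ⬝ G ⊆ Y := by
  rintro _ ⟨y, hy, g, hg, rfl⟩
  rw [hY] at hy ⊢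
  refine mapsTo_clSpan ((compL ℂ H₂ H₂ H₅).flip g) ?_ hy
  rintro _ ⟨_, ⟨a, ha, b, hb, rfl⟩, c, hc, rfl⟩
  rw [flip_apply, compL_apply, comp_assoc]
  exact subset_clSpan (A ⬝ B ⬝ C)
    ⟨_, ⟨a, ha, b, hb, rfl⟩, c.comp g, hG ⟨c, hc, g, hg, rfl⟩, rfl⟩

end Sandwich

lemma eq_clSpan_setMul_trans {H₁ H₂ K₁ K₂ W₁ W₂ : Type*}
    [NormedAddCommGroup H₁] [NormedSpace ℂ H₁] [NormedAddCommGroup H₂] [NormedSpace ℂ H₂]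
    [NormedAddCommGroup K₁] [NormedSpace ℂ K₁] [NormedAddCommGroup K₂] [NormedSpace ℂ K₂]
    [NormedAddCommGroup W₁] [NormedSpace ℂ W₁] [NormedAddCommGroup W₂] [NormedSpace ℂ W₂]
    {X : Set (K₁ →L[ℂ] K₂)} {Y : Set (H₁ →L[ℂ] H₂)} {Z : Set (W₁ →L[ℂ] W₂)}
    {A : Set (H₂ →L[ℂ] K₂)} {B : Set (K₁ →L[ℂ] H₁)} {C : Set (W₂ →L[ℂ] H₂)}
    {D : Set (H₁ →L[ℂ] W₁)} {E : Set (H₂ →L[ℂ] H₂)} {F : Set (H₁ →L[ℂ] H₁)}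
    (hX : X = clSpan (A ⬝ Y ⬝ B)) (hY : Y = clSpan (C ⬝ Z ⬝ D))
    (hEYF : clSpan (E ⬝ Y ⬝ F) = Y) :
    X = clSpan (clSpan (A ⬝ E ⬝ C) ⬝ Z ⬝ clSpan (D ⬝ F ⬝ B)) := by
  have hAEYFB : clSpan (A ⬝ Y ⬝ B) = clSpan (A ⬝ E ⬝ Y ⬝ (F ⬝ B)) :=
    clSpan_setMul_setMul_of_eq hEYF.symm A B
  rw [clSpan_setMul_congr (clSpan_setMul_congr (clSpan_clSpan _) rfl) (clSpan_clSpan _), hX,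
    hAEYFB, clSpan_setMul_setMul_of_eq hY]
  simp only [setMul_assoc]

section Multipliers

variable {H₁ H₂ : Type*}
  [NormedAddCommGroup H₁] [NormedSpace ℂ H₁] [NormedAddCommGroup H₂] [NormedSpace ℂ H₂]

def leftMultipliers (Y : Submodule ℂ (H₁ →L[ℂ] H₂)) : NonUnitalSubalgebra ℂ (H₂ →L[ℂ] H₂) where
  carrier := {d | ∀ y ∈ Y, d.comp y ∈ Y}
  zero_mem' _ _ := by simp
  add_mem' ha hb y hy := by simpa only [add_comp] using Y.add_mem (ha y hy) (hb y hy)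
  mul_mem' ha hb y hy := by simpa only [mul_def, comp_assoc] using ha _ (hb y hy)
  smul_mem' c _ ha y hy := by simpa only [smul_comp] using Y.smul_mem c (ha y hy)

def rightMultipliers (Y : Submodule ℂ (H₁ →L[ℂ] H₂)) : NonUnitalSubalgebra ℂ (H₁ →L[ℂ] H₁) where
  carrier := {d | ∀ y ∈ Y, y.comp d ∈ Y}
  zero_mem' _ _ := by simp
  add_mem' ha hb y hy := by simpa only [comp_add] using Y.add_mem (ha y hy) (hb y hy)
  mul_mem' ha hb y hy := by simpa only [mul_def, ← comp_assoc] using hb _ (ha y hy)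
  smul_mem' c _ ha y hy := by simpa only [comp_smul] using Y.smul_mem c (ha y hy)

lemma isClosed_leftMultipliers {Y : Submodule ℂ (H₁ →L[ℂ] H₂)}
    (hY : IsClosed (Y : Set (H₁ →L[ℂ] H₂))) :
    IsClosed (leftMultipliers Y : Set (H₂ →L[ℂ] H₂)) := by
  show IsClosed {d : H₂ →L[ℂ] H₂ | ∀ y ∈ Y, d.comp y ∈ Y}
  simp only [Set.ofPred_forall]
  exact isClosed_iInter fun y => isClosed_iInter fun _ =>
    hY.preimage (continuous_id.clm_comp continuous_const)

lemma isClosed_rightMultipliers {Y : Submodule ℂ (H₁ →L[ℂ] H₂)}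
    (hY : IsClosed (Y : Set (H₁ →L[ℂ] H₂))) :
    IsClosed (rightMultipliers Y : Set (H₁ →L[ℂ] H₁)) := by
  show IsClosed {d : H₁ →L[ℂ] H₁ | ∀ y ∈ Y, y.comp d ∈ Y}
  simp only [Set.ofPred_forall]
  exact isClosed_iInter fun y => isClosed_iInter fun _ =>
    hY.preimage (continuous_const.clm_comp continuous_id)

end Multipliers

section Adjoint

variable {H K L : Type*}
  [NormedAddCommGroup H] [InnerProductSpace ℂ H] [CompleteSpace H]
  [NormedAddCommGroup K] [InnerProductSpace ℂ K] [CompleteSpace K]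
  [NormedAddCommGroup L] [InnerProductSpace ℂ L] [CompleteSpace L]

lemma adjSet_eq_image (S : Set (H →L[ℂ] K)) :
    adjSet S = (adjoint : (H →L[ℂ] K) ≃ₗᵢ⋆[ℂ] (K →L[ℂ] H)) '' S := by
  ext x
  exact ⟨fun ⟨s, hs, h⟩ => ⟨s, hs, h.symm⟩, fun ⟨s, hs, h⟩ => ⟨s, hs, h.symm⟩⟩

lemma adjSet_eq_star (S : Set (H →L[ℂ] H)) : adjSet S = star S := by
  rw [adjSet_eq_image, ← Set.image_star]
  rfl

@[simp]
lemma adjSet_adjSet (S : Set (H →L[ℂ] K)) : adjSet (adjSet S) = S := by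
  simp [adjSet_eq_image, Set.image_image]

lemma adjSet_mono {S T : Set (H →L[ℂ] K)} (h : S ⊆ T) : adjSet S ⊆ adjSet T := by
  simpa only [adjSet_eq_image] using Set.image_mono h

@[simp]
lemma adjSet_union (S T : Set (H →L[ℂ] K)) : adjSet (S ∪ T) = adjSet S ∪ adjSet T := by
  simp only [adjSet_eq_image, Set.image_union]

@[simp]
lemma adjSet_setMul (S : Set (K →L[ℂ] L)) (T : Set (H →L[ℂ] K)) :
    adjSet (S ⬝ T) = adjSet T ⬝ adjSet S := by
  ext x
  constructor
  · rintro ⟨-, ⟨s, hs, t, ht, rfl⟩, rfl⟩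
    exact ⟨adjoint t, ⟨t, ht, rfl⟩, adjoint s, ⟨s, hs, rfl⟩, adjoint_comp s t⟩
  · rintro ⟨-, ⟨t, ht, rfl⟩, -, ⟨s, hs, rfl⟩, rfl⟩
    exact ⟨s.comp t, ⟨s, hs, t, ht, rfl⟩, (adjoint_comp s t).symm⟩

lemma adjSet_clSpan (S : Set (H →L[ℂ] K)) : adjSet (clSpan S) = clSpan (adjSet S) := by
  let e := (adjoint : (H →L[ℂ] K) ≃ₗᵢ⋆[ℂ] (K →L[ℂ] H))
  have hspan : e '' (Submodule.span ℂ S : Set (H →L[ℂ] K)) = Submodule.span ℂ (e '' S) :=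
    congrArg SetLike.coe (Submodule.map_span e.toLinearEquiv.toLinearMap S)
  rw [adjSet_eq_image, adjSet_eq_image, clSpan, clSpan, ← hspan]
  exact e.toHomeomorph.image_closure _

lemma adjSet_clSpan_setMul_setMul {A : Set (K →L[ℂ] L)} {D : Set (K →L[ℂ] K)}
    {B : Set (H →L[ℂ] K)} (hD : adjSet D = D) :
    adjSet (clSpan (A ⬝ D ⬝ B)) = clSpan (adjSet B ⬝ D ⬝ adjSet A) := by
  rw [adjSet_clSpan, adjSet_setMul, adjSet_setMul, hD, setMul_assoc]

lemma adjSet_closure_adjoin (G : Set (H →L[ℂ] H)) :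
    adjSet (closure (NonUnitalStarAlgebra.adjoin ℂ G : Set (H →L[ℂ] H))) =
      closure (NonUnitalStarAlgebra.adjoin ℂ G : Set (H →L[ℂ] H)) := by
  ext x
  rw [adjSet_eq_star, Set.mem_star]
  exact star_mem_iff (s := (NonUnitalStarAlgebra.adjoin ℂ G).topologicalClosure)

lemma IsTRO.setMul_adjSet_setMul_subset {M : Set (H →L[ℂ] K)} (hM : IsTRO M) :
    M ⬝ adjSet M ⬝ M ⊆ M := by
  rintro _ ⟨-, ⟨a, ha, -, ⟨b, hb, rfl⟩, rfl⟩, c, hc, rfl⟩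
  exact hM.ternary a ha b hb c hc

lemma IsTRO.adjSet_setMul_setMul_adjSet_subset {M : Set (H →L[ℂ] K)} (hM : IsTRO M) :
    adjSet M ⬝ M ⬝ adjSet M ⊆ adjSet M := by
  simpa only [adjSet_setMul, adjSet_adjSet, setMul_assoc] using
    adjSet_mono hM.setMul_adjSet_setMul_subset

end Adjoint

lemma closure_adjoin_setMul_subset {H K : Type*} [NormedAddCommGroup H] [NormedSpace ℂ H]
    [NormedAddCommGroup K] [InnerProductSpace ℂ K] [CompleteSpace K]
    {Y : Set (H →L[ℂ] K)} (hY : IsOperatorSpace Y)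
    {G : Set (K →L[ℂ] K)} (hG : G ⬝ Y ⊆ Y) (hGs : adjSet G = G) :
    closure (NonUnitalStarAlgebra.adjoin ℂ G : Set (K →L[ℂ] K)) ⬝ Y ⊆ Y := by
  obtain ⟨hclosed, p, rfl⟩ := hY
  have hGp : G ∪ star G ⊆ leftMultipliers p := by
    rw [← adjSet_eq_star, hGs, Set.union_self]
    exact fun g hg y hy => hG ⟨g, hg, y, hy, rfl⟩
  have hD := closure_minimal (NonUnitalAlgebra.adjoin_le hGp) (isClosed_leftMultipliers hclosed)
  rintro _ ⟨d, hd, y, hy, rfl⟩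
  exact hD hd y hy

lemma setMul_closure_adjoin_subset {H K : Type*} [NormedAddCommGroup H] [InnerProductSpace ℂ H]
    [CompleteSpace H] [NormedAddCommGroup K] [NormedSpace ℂ K]
    {Y : Set (H →L[ℂ] K)} (hY : IsOperatorSpace Y)
    {G : Set (H →L[ℂ] H)} (hG : Y ⬝ G ⊆ Y) (hGs : adjSet G = G) :
    Y ⬝ closure (NonUnitalStarAlgebra.adjoin ℂ G : Set (H →L[ℂ] H)) ⊆ Y := by
  obtain ⟨hclosed, p, rfl⟩ := hY
  have hGp : G ∪ star G ⊆ rightMultipliers p := by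
    rw [← adjSet_eq_star, hGs, Set.union_self]
    exact fun g hg y hy => hG ⟨y, hy, g, hg, rfl⟩
  have hD := closure_minimal (NonUnitalAlgebra.adjoin_le hGp) (isClosed_rightMultipliers hclosed)
  rintro _ ⟨y, hy, d, hd, rfl⟩
  exact hD hd y hy

lemma clSpan_closure_adjoin_setMul_setMul_closure_adjoin {H₁ H₂ : Type*}
    [NormedAddCommGroup H₁] [InnerProductSpace ℂ H₁] [CompleteSpace H₁]
    [NormedAddCommGroup H₂] [InnerProductSpace ℂ H₂] [CompleteSpace H₂]
    {Y : Set (H₁ →L[ℂ] H₂)} (hY : IsOperatorSpace Y)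
    {G₁ : Set (H₁ →L[ℂ] H₁)} {G₂ : Set (H₂ →L[ℂ] H₂)}
    (hG₁ : Y ⬝ G₁ ⊆ Y) (hG₁s : adjSet G₁ = G₁) (hG₂ : G₂ ⬝ Y ⊆ Y) (hG₂s : adjSet G₂ = G₂)
    (hYG : Y ⊆ clSpan (G₂ ⬝ Y ⬝ G₁)) :
    clSpan (closure (NonUnitalStarAlgebra.adjoin ℂ G₂ : Set (H₂ →L[ℂ] H₂)) ⬝ Y ⬝
      closure (NonUnitalStarAlgebra.adjoin ℂ G₁ : Set (H₁ →L[ℂ] H₁))) = Y := by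
  refine subset_antisymm ?_ (hYG.trans (clSpan_mono (setMul_mono (setMul_mono
    ((NonUnitalStarAlgebra.subset_adjoin ℂ G₂).trans subset_closure) subset_rfl)
    ((NonUnitalStarAlgebra.subset_adjoin ℂ G₁).trans subset_closure))))
  refine (clSpan_mono ?_).trans hY.clSpan_eq.subset
  exact (setMul_mono (closure_adjoin_setMul_subset hY hG₂ hG₂s) subset_rfl).trans
    (setMul_closure_adjoin_subset hY hG₁ hG₁s)

/-- Strong TRO equivalence is transitive, with explicit witnessing TROs
`Lᵢ = cl span(Mᵢ Dᵢ Nᵢ)`, where `Dᵢ` is the C*-algebra generated by `Mᵢ* Mᵢ ∪ Nᵢ Nᵢ*`. -/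
theorem strongTROEquiv_trans
    {K₁ K₂ H₁ H₂ W₁ W₂ : Type*}
    [NormedAddCommGroup K₁] [InnerProductSpace ℂ K₁] [CompleteSpace K₁]
    [NormedAddCommGroup K₂] [InnerProductSpace ℂ K₂] [CompleteSpace K₂]
    [NormedAddCommGroup H₁] [InnerProductSpace ℂ H₁] [CompleteSpace H₁]
    [NormedAddCommGroup H₂] [InnerProductSpace ℂ H₂] [CompleteSpace H₂]
    [NormedAddCommGroup W₁] [InnerProductSpace ℂ W₁] [CompleteSpace W₁]
    [NormedAddCommGroup W₂] [InnerProductSpace ℂ W₂] [CompleteSpace W₂]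
    (X : Set (K₁ →L[ℂ] K₂)) (Y : Set (H₁ →L[ℂ] H₂)) (Z : Set (W₁ →L[ℂ] W₂))
    (M₁ : Set (H₁ →L[ℂ] K₁)) (M₂ : Set (H₂ →L[ℂ] K₂))
    (N₁ : Set (W₁ →L[ℂ] H₁)) (N₂ : Set (W₂ →L[ℂ] H₂))
    (hM₁ : IsTRO M₁) (hM₂ : IsTRO M₂) (hN₁ : IsTRO N₁) (hN₂ : IsTRO N₂)
    (hX : X = clSpan (setMul (setMul M₂ Y) (adjSet M₁)))
    (hY : Y = clSpan (setMul (setMul (adjSet M₂) X) M₁))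
    (hY' : Y = clSpan (setMul (setMul N₂ Z) (adjSet N₁)))
    (hZ : Z = clSpan (setMul (setMul (adjSet N₂) Y) N₁))
    -- the C*-algebras `D₁`, `D₂` generated by `Mᵢ* Mᵢ ∪ Nᵢ Nᵢ*`
    (D₁ : Set (H₁ →L[ℂ] H₁)) (D₂ : Set (H₂ →L[ℂ] H₂))
    (hD₁ : D₁ = closure (NonUnitalStarAlgebra.adjoin ℂ
      (setMul (adjSet M₁) M₁ ∪ setMul N₁ (adjSet N₁)) : Set (H₁ →L[ℂ] H₁)))
    (hD₂ : D₂ = closure (NonUnitalStarAlgebra.adjoin ℂ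
      (setMul (adjSet M₂) M₂ ∪ setMul N₂ (adjSet N₂)) : Set (H₂ →L[ℂ] H₂))) :
    X = clSpan (setMul (setMul (clSpan (setMul (setMul M₂ D₂) N₂)) Z)
      (adjSet (clSpan (setMul (setMul M₁ D₁) N₁)))) ∧
    Z = clSpan (setMul (setMul (adjSet (clSpan (setMul (setMul M₂ D₂) N₂))) X)
      (clSpan (setMul (setMul M₁ D₁) N₁))) := by
  have hYM₁ : Y ⬝ (adjSet M₁ ⬝ M₁) ⊆ Y := setMul_subset_of_eq_clSpan_right hY
    (by rw [← setMul_assoc]; exact hM₁.setMul_adjSet_setMul_subset)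
  have hYN₁ : Y ⬝ (N₁ ⬝ adjSet N₁) ⊆ Y := setMul_subset_of_eq_clSpan_right hY'
    (by rw [← setMul_assoc]; exact hN₁.adjSet_setMul_setMul_adjSet_subset)
  have hM₂Y : adjSet M₂ ⬝ M₂ ⬝ Y ⊆ Y :=
    setMul_subset_of_eq_clSpan_left hY hM₂.adjSet_setMul_setMul_adjSet_subset
  have hN₂Y : N₂ ⬝ adjSet N₂ ⬝ Y ⊆ Y :=
    setMul_subset_of_eq_clSpan_left hY' hN₂.setMul_adjSet_setMul_subset
  have hY_sub : Y ⊆ clSpan (adjSet M₂ ⬝ M₂ ⬝ Y ⬝ (adjSet M₁ ⬝ M₁)) :=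
    (hY.trans (clSpan_setMul_setMul_of_eq hX _ _)).subset
  have hDY : clSpan (D₂ ⬝ Y ⬝ D₁) = Y := by
    subst hD₁ hD₂
    refine clSpan_closure_adjoin_setMul_setMul_closure_adjoin (hY ▸ isOperatorSpace_clSpan _)
      (by rw [setMul_union]; exact Set.union_subset hYM₁ hYN₁) (by simp)
      (by rw [union_setMul]; exact Set.union_subset hM₂Y hN₂Y) (by simp)
      (hY_sub.trans (clSpan_mono (setMul_mono (setMul_mono Set.subset_union_left subset_rfl)
        Set.subset_union_left)))
  rw [adjSet_clSpan_setMul_setMul (hD₁ ▸ adjSet_closure_adjoin _),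
    adjSet_clSpan_setMul_setMul (hD₂ ▸ adjSet_closure_adjoin _)]
  exact ⟨eq_clSpan_setMul_trans hX hY' hDY, eq_clSpan_setMul_trans hZ hY hDY⟩

end
end

section
/- Let Y and Z be operator spaces with Y = cl span(M₂* Z) for a TRO M₂ containing a sequence (mᵢ) such that each Σ_{i=1}^k mᵢ mᵢ* is a contraction and Σ_{i=1}^k mᵢ mᵢ* z → z for all z ∈ Z. Then the map φ : Z → C_∞(Y), φ(z) = [mᵢ* z]ᵢ, is a complete isometry, the map ψ : C_∞(Y) → Z, ψ([yᵢ]) = Σᵢ mᵢ yᵢ, is a complete contraction onto Z, and ψ ∘ φ = id_Z; consequently C_∞(Y) ≅ φ(Z) ⊕ (range of the complementary projection) completely isometrically. -/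
noncomputable section
open ContinuousLinearMap Filter Topology

/-- The operator `H₁^n → H₂^n` (with the ℓ²-norms) associated to an `n × n` matrix of
operators. -/
def matOp {H₁ H₂ : Type*} [NormedAddCommGroup H₁] [InnerProductSpace ℂ H₁]
    [NormedAddCommGroup H₂] [InnerProductSpace ℂ H₂] {n : ℕ}
    (x : Matrix (Fin n) (Fin n) (H₁ →L[ℂ] H₂)) :
    (PiLp 2 fun _ : Fin n => H₁) →L[ℂ] (PiLp 2 fun _ : Fin n => H₂) :=
  (((PiLp.continuousLinearEquiv 2 ℂ fun _ : Fin n => H₂).symm :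
      (∀ _ : Fin n, H₂) →L[ℂ] PiLp 2 fun _ : Fin n => H₂).comp
    (ContinuousLinearMap.pi fun i => ∑ j, (x i j).comp (ContinuousLinearMap.proj j))).comp
    ((PiLp.continuousLinearEquiv 2 ℂ fun _ : Fin n => H₁ :
      (PiLp 2 fun _ : Fin n => H₁) →L[ℂ] ∀ _ : Fin n, H₁))

/-- A linear map between operator spaces is completely contractive on `X` if all its matrix
amplifications are contractive on matrices with entries from `X`. -/
def CompletelyContractiveOn {H₁ H₂ K₁ K₂ : Type*}
    [NormedAddCommGroup H₁] [InnerProductSpace ℂ H₁] [NormedAddCommGroup H₂]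
    [InnerProductSpace ℂ H₂] [NormedAddCommGroup K₁] [InnerProductSpace ℂ K₁]
    [NormedAddCommGroup K₂] [InnerProductSpace ℂ K₂]
    (f : (H₁ →L[ℂ] H₂) →ₗ[ℂ] (K₁ →L[ℂ] K₂)) (X : Set (H₁ →L[ℂ] H₂)) : Prop :=
  ∀ (n : ℕ) (x : Matrix (Fin n) (Fin n) (H₁ →L[ℂ] H₂)), (∀ i j, x i j ∈ X) →
    ‖matOp (Matrix.of fun i j => f (x i j))‖ ≤ ‖matOp x‖

/-- A linear map between operator spaces is completely isometric on `X` if all its matrix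
amplifications are isometric on matrices with entries from `X`. -/
def CompletelyIsometricOn {H₁ H₂ K₁ K₂ : Type*}
    [NormedAddCommGroup H₁] [InnerProductSpace ℂ H₁] [NormedAddCommGroup H₂]
    [InnerProductSpace ℂ H₂] [NormedAddCommGroup K₁] [InnerProductSpace ℂ K₁]
    [NormedAddCommGroup K₂] [InnerProductSpace ℂ K₂]
    (f : (H₁ →L[ℂ] H₂) →ₗ[ℂ] (K₁ →L[ℂ] K₂)) (X : Set (H₁ →L[ℂ] H₂)) : Prop :=
  ∀ (n : ℕ) (x : Matrix (Fin n) (Fin n) (H₁ →L[ℂ] H₂)), (∀ i j, x i j ∈ X) →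
    ‖matOp (Matrix.of fun i j => f (x i j))‖ = ‖matOp x‖

/-- Evaluation at a coordinate, as a continuous linear map on `ℓ²(ℕ, E)`. -/
def lpProj (E : Type*) [NormedAddCommGroup E] [NormedSpace ℂ E] (i : ℕ) :
    lp (fun _ : ℕ => E) 2 →L[ℂ] E :=
  LinearMap.mkContinuous
    { toFun := fun f => f i
      map_add' := fun f g => by simp
      map_smul' := fun c f => by simp }
    1 (fun f => by
      show ‖(f : ∀ _ : ℕ, E) i‖ ≤ 1 * ‖f‖
      simpa using lp.norm_apply_le_norm (by norm_num : (2 : ENNReal) ≠ 0) f i)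

/-- Inclusion of a coordinate, as a continuous linear map into `ℓ²(ℕ, E)`. -/
def lpSingle (E : Type*) [NormedAddCommGroup E] [NormedSpace ℂ E] (i : ℕ) :
    E →L[ℂ] lp (fun _ : ℕ => E) 2 :=
  LinearMap.mkContinuous
    { toFun := fun a => lp.single 2 i a
      map_add' := fun a b => by
        apply lp.ext; funext j
        by_cases h : j = i
        · subst h; simp [lp.single_apply_self]
        · simp [lp.single_apply_ne _ _ _ h]
      map_smul' := fun c a => by simp }
    1 (fun a => by
      rw [one_mul]
      exact (lp.norm_single (p := 2) (E := fun _ : ℕ => E) (by norm_num) i a).le)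

/-- The column space `C_∞(Y) ⊆ B(K₁, G^{(∞)})` over an operator space `Y ⊆ B(K₁, G)`:
operators all of whose components lie in `Y` and with `Σ yᵢ* yᵢ` norm convergent. -/
def ColInf {K₁ G : Type*} [NormedAddCommGroup K₁] [InnerProductSpace ℂ K₁] [CompleteSpace K₁]
    [NormedAddCommGroup G] [InnerProductSpace ℂ G] [CompleteSpace G]
    (Y : Set (K₁ →L[ℂ] G)) : Set (K₁ →L[ℂ] lp (fun _ : ℕ => G) 2) :=
  {T | (∀ i, (lpProj G i).comp T ∈ Y) ∧
    ∃ S : K₁ →L[ℂ] K₁, Tendsto (fun n => ∑ i ∈ Finset.range n,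
      (ContinuousLinearMap.adjoint ((lpProj G i).comp T)).comp ((lpProj G i).comp T))
      atTop (nhds S)}

/-! Everything is carried by the column `C : K₂ → ℓ²(G)`, `v ↦ (mᵢ* v)ᵢ`, a contraction by
Bessel's inequality coming from `‖Σ_{i<k} mᵢ mᵢ*‖ ≤ 1`. Then `φ = C ∘ -` and `ψ = C* ∘ -` with
`C* f = Σ mᵢ fᵢ`; left multiplication by a contraction is contractive at every matrix level, and
`C* C = Σ mᵢ mᵢ*` strongly, which fixes `Z`, so `ψ φ = id` on `Z` and `φ` is completely isometric.
For `T ∈ C_∞(Y)` the tail `C* T - Σ_{i<k} mᵢ yᵢ` is `C*` applied to the tail of `T`, whose square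
is dominated by the tail `S - Σ_{i<k} yᵢ* yᵢ` of the norm-convergent series; hence the series
for `ψ T` converges in norm and `ψ T ∈ Z`. Orthogonality is `C* (T - C C* T) = 0`. -/

open scoped InnerProductSpace

theorem ContinuousLinearMap.tendsto_zero_of_norm_apply_sq_le {α 𝕜 E F : Type*}
    [NontriviallyNormedField 𝕜] [SeminormedAddCommGroup E] [NormedSpace 𝕜 E]
    [SeminormedAddCommGroup F] [NormedSpace 𝕜 F] {l : Filter α} {A : α → E →L[𝕜] F}
    {c : α → ℝ} (hc : Tendsto c l (𝓝 0)) (hA : ∀ a x, ‖A a x‖ ^ 2 ≤ c a * ‖x‖ ^ 2) :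
    Tendsto A l (𝓝 0) := by
  have hbound : ∀ a, ‖A a‖ ≤ √(c a) := fun a =>
    (A a).opNorm_le_bound (Real.sqrt_nonneg _) fun x => by
      rw [← Real.sqrt_sq (norm_nonneg (A a x)), ← Real.sqrt_sq (norm_nonneg x),
        ← Real.sqrt_mul' _ (sq_nonneg _)]
      exact Real.sqrt_le_sqrt (hA a x)
  exact squeeze_zero_norm hbound (by simpa using hc.sqrt)

theorem ContinuousLinearMap.re_inner_apply_self_le {𝕜 E : Type*} [RCLike 𝕜]
    [NormedAddCommGroup E] [InnerProductSpace 𝕜 E] (A : E →L[𝕜] E) (x : E) :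
    RCLike.re ⟪A x, x⟫_𝕜 ≤ ‖A‖ * ‖x‖ ^ 2 :=
  calc RCLike.re ⟪A x, x⟫_𝕜 ≤ ‖A x‖ * ‖x‖ := re_inner_le_norm _ _
    _ ≤ ‖A‖ * ‖x‖ * ‖x‖ := by gcongr; exact A.le_opNorm x
    _ = ‖A‖ * ‖x‖ ^ 2 := by ring

theorem ContinuousLinearMap.re_inner_sum_adjoint_comp_self_apply {ι 𝕜 E F : Type*} [RCLike 𝕜]
    [NormedAddCommGroup E] [InnerProductSpace 𝕜 E] [CompleteSpace E]
    [NormedAddCommGroup F] [InnerProductSpace 𝕜 F] [CompleteSpace F]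
    (A : ι → E →L[𝕜] F) (s : Finset ι) (x : E) :
    RCLike.re ⟪(∑ i ∈ s, adjoint (A i) ∘L A i) x, x⟫_𝕜 = ∑ i ∈ s, ‖A i x‖ ^ 2 := by
  simp only [sum_apply, sum_inner, map_sum, apply_norm_sq_eq_inner_adjoint_left]

namespace lp

variable {ι : Type*} {E : ι → Type*} [∀ i, NormedAddCommGroup (E i)]

theorem hasSum_norm_sq (f : lp E 2) : HasSum (fun i => ‖f i‖ ^ 2) (‖f‖ ^ 2) := by
  simpa using lp.hasSum_norm (p := 2) (by norm_num) f

theorem norm_sub_sum_single_sq [DecidableEq ι] (f : lp E 2) (s : Finset ι) :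
    ‖f - ∑ i ∈ s, lp.single 2 i (f i)‖ ^ 2 = ‖f‖ ^ 2 - ∑ i ∈ s, ‖f i‖ ^ 2 := by
  simpa using lp.norm_compl_sum_single (p := 2) (by norm_num) f s

end lp

@[simp]
theorem lpProj_apply {E : Type*} [NormedAddCommGroup E] [NormedSpace ℂ E] (i : ℕ)
    (f : lp (fun _ : ℕ => E) 2) : lpProj E i f = f i :=
  rfl

section MatOp

variable {H₁ H₂ H₃ : Type*} [NormedAddCommGroup H₁] [InnerProductSpace ℂ H₁]
  [NormedAddCommGroup H₂] [InnerProductSpace ℂ H₂] [NormedAddCommGroup H₃] [InnerProductSpace ℂ H₃]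

theorem matOp_apply {n : ℕ} (x : Matrix (Fin n) (Fin n) (H₁ →L[ℂ] H₂))
    (ξ : PiLp 2 fun _ : Fin n => H₁) (i : Fin n) :
    matOp x ξ i = ∑ j, x i j (ξ j) := by
  simp [matOp, sum_apply]

theorem norm_matOp_comp_left_le {n : ℕ} {A : H₂ →L[ℂ] H₃} (hA : ‖A‖ ≤ 1)
    (x : Matrix (Fin n) (Fin n) (H₁ →L[ℂ] H₂)) :
    ‖matOp (Matrix.of fun i j => A ∘L x i j)‖ ≤ ‖matOp x‖ := by
  refine opNorm_le_bound _ (norm_nonneg (matOp x)) fun ξ => le_trans ?_ ((matOp x).le_opNorm ξ)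
  rw [← sq_le_sq₀ (norm_nonneg _) (norm_nonneg _), PiLp.norm_sq_eq_of_L2,
    PiLp.norm_sq_eq_of_L2]
  gcongr with i
  simpa [matOp_apply, map_sum] using A.le_of_opNorm_le hA (matOp x ξ i)

theorem completelyContractiveOn_compL {A : H₂ →L[ℂ] H₃} (hA : ‖A‖ ≤ 1)
    (X : Set (H₁ →L[ℂ] H₂)) :
    CompletelyContractiveOn (compL ℂ H₁ H₂ H₃ A : (H₁ →L[ℂ] H₂) →ₗ[ℂ] (H₁ →L[ℂ] H₃)) X :=
  fun _ x _ => norm_matOp_comp_left_le hA x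

theorem completelyIsometricOn_compL {A : H₂ →L[ℂ] H₃} {B : H₃ →L[ℂ] H₂} (hA : ‖A‖ ≤ 1)
    (hB : ‖B‖ ≤ 1) {X : Set (H₁ →L[ℂ] H₂)} (hBA : ∀ x ∈ X, B ∘L (A ∘L x) = x) :
    CompletelyIsometricOn (compL ℂ H₁ H₂ H₃ A : (H₁ →L[ℂ] H₂) →ₗ[ℂ] (H₁ →L[ℂ] H₃)) X := by
  intro n x hx
  refine le_antisymm (norm_matOp_comp_left_le hA x) ?_
  calc ‖matOp x‖
      = ‖matOp (Matrix.of fun i j => B ∘L (Matrix.of fun i j => A ∘L x i j) i j)‖ := by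
        simp only [Matrix.of_apply, hBA _ (hx _ _)]
        rfl
    _ ≤ _ := norm_matOp_comp_left_le hB _

end MatOp

section ColumnOperator

variable {K₂ G : Type*} [NormedAddCommGroup K₂] [InnerProductSpace ℂ K₂] [CompleteSpace K₂]
  [NormedAddCommGroup G] [InnerProductSpace ℂ G] [CompleteSpace G]

theorem sum_norm_adjoint_apply_sq_le {m : ℕ → G →L[ℂ] K₂}
    (hcontr : ∀ k, ‖∑ i ∈ Finset.range k, m i ∘L adjoint (m i)‖ ≤ 1) (v : K₂) (s : Finset ℕ) :
    ∑ i ∈ s, ‖adjoint (m i) v‖ ^ 2 ≤ ‖v‖ ^ 2 := by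
  obtain ⟨N, hsN⟩ := s.exists_nat_subset_range
  calc ∑ i ∈ s, ‖adjoint (m i) v‖ ^ 2 ≤ ∑ i ∈ Finset.range N, ‖adjoint (m i) v‖ ^ 2 :=
        Finset.sum_le_sum_of_subset_of_nonneg hsN fun _ _ _ => sq_nonneg _
    _ = RCLike.re ⟪(∑ i ∈ Finset.range N, m i ∘L adjoint (m i)) v, v⟫_ℂ := by
        simpa only [adjoint_adjoint] using
          (re_inner_sum_adjoint_comp_self_apply (fun i => adjoint (m i)) _ v).symm
    _ ≤ ‖∑ i ∈ Finset.range N, m i ∘L adjoint (m i)‖ * ‖v‖ ^ 2 := re_inner_apply_self_le _ v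
    _ ≤ 1 * ‖v‖ ^ 2 := by gcongr; exact hcontr N
    _ = ‖v‖ ^ 2 := one_mul _

def colOp (m : ℕ → G →L[ℂ] K₂) (hcontr : ∀ k, ‖∑ i ∈ Finset.range k, m i ∘L adjoint (m i)‖ ≤ 1) :
    K₂ →L[ℂ] lp (fun _ : ℕ => G) 2 :=
  LinearMap.mkContinuous
    { toFun := fun v => ⟨fun i => adjoint (m i) v, memℓp_gen' (C := ‖v‖ ^ 2) fun s => by
        simpa using sum_norm_adjoint_apply_sq_le hcontr v s⟩
      map_add' := fun v w => lp.ext <| funext fun i => by simp; rfl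
      map_smul' := fun c v => lp.ext <| funext fun i => by simp }
    1 fun v => by
      rw [one_mul]
      refine lp.norm_le_of_forall_sum_le (by norm_num) (norm_nonneg v) fun s => ?_
      simpa using sum_norm_adjoint_apply_sq_le hcontr v s

variable {m : ℕ → G →L[ℂ] K₂} (hcontr : ∀ k, ‖∑ i ∈ Finset.range k, m i ∘L adjoint (m i)‖ ≤ 1)

@[simp]
theorem colOp_apply_coe (v : K₂) (i : ℕ) : (colOp m hcontr v : ℕ → G) i = adjoint (m i) v :=
  rfl

theorem lpProj_comp_colOp (i : ℕ) : lpProj G i ∘L colOp m hcontr = adjoint (m i) :=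
  rfl

theorem norm_colOp_le : ‖colOp m hcontr‖ ≤ 1 :=
  LinearMap.mkContinuous_norm_le _ zero_le_one _

theorem norm_adjoint_colOp_le : ‖adjoint (colOp m hcontr)‖ ≤ 1 := by
  rw [adjoint.norm_map]
  exact norm_colOp_le hcontr

theorem adjoint_colOp_single (i : ℕ) (g : G) : adjoint (colOp m hcontr) (lp.single 2 i g) = m i g :=
  ext_inner_right ℂ fun v => by
    rw [adjoint_inner_left, lp.inner_single_left, colOp_apply_coe, adjoint_inner_right]

theorem hasSum_adjoint_colOp_apply (f : lp (fun _ : ℕ => G) 2) :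
    HasSum (fun i => m i (f i)) (adjoint (colOp m hcontr) f) := by
  simpa only [adjoint_colOp_single] using
    (adjoint (colOp m hcontr)).hasSum (lp.hasSum_single (by norm_num) f)

theorem adjoint_colOp_sub_sum_range (f : lp (fun _ : ℕ => G) 2) (k : ℕ) :
    adjoint (colOp m hcontr) f - ∑ i ∈ Finset.range k, m i (f i) =
      adjoint (colOp m hcontr) (f - ∑ i ∈ Finset.range k, lp.single 2 i (f i)) := by
  simp only [map_sub, map_sum, adjoint_colOp_single]

theorem adjoint_colOp_comp_colOp_comp {E : Type*} [NormedAddCommGroup E] [NormedSpace ℂ E]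
    {z : E →L[ℂ] K₂}
    (hz : Tendsto (fun k => (∑ i ∈ Finset.range k, m i ∘L adjoint (m i)) ∘L z) atTop (𝓝 z)) :
    adjoint (colOp m hcontr) ∘L (colOp m hcontr ∘L z) = z := by
  ext x
  refine tendsto_nhds_unique (hasSum_adjoint_colOp_apply hcontr _).tendsto_sum_nat ?_
  simpa [Function.comp_def, sum_apply] using ((apply ℂ K₂ x).continuous.tendsto z).comp hz

end ColumnOperator

section ColumnSpace

variable {K₁ K₂ G : Type*} [NormedAddCommGroup K₁] [InnerProductSpace ℂ K₁] [CompleteSpace K₁]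
  [NormedAddCommGroup K₂] [InnerProductSpace ℂ K₂] [CompleteSpace K₂]
  [NormedAddCommGroup G] [InnerProductSpace ℂ G] [CompleteSpace G]

theorem norm_sq_apply_eq_re_inner_of_tendsto {T : K₁ →L[ℂ] lp (fun _ : ℕ => G) 2}
    {S : K₁ →L[ℂ] K₁} (hS : Tendsto (fun n => ∑ i ∈ Finset.range n,
      adjoint (lpProj G i ∘L T) ∘L (lpProj G i ∘L T)) atTop (𝓝 S)) (x : K₁) :
    ‖T x‖ ^ 2 = RCLike.re ⟪S x, x⟫_ℂ := by
  have hcont : Continuous fun A : K₁ →L[ℂ] K₁ => RCLike.re ⟪A x, x⟫_ℂ :=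
    RCLike.continuous_re.comp ((apply ℂ K₁ x).continuous.inner continuous_const)
  refine tendsto_nhds_unique (lp.hasSum_norm_sq (T x)).tendsto_sum_nat ?_
  simpa only [Function.comp_def, re_inner_sum_adjoint_comp_self_apply, comp_apply, lpProj_apply]
    using (hcont.tendsto S).comp hS

variable {m : ℕ → G →L[ℂ] K₂} (hcontr : ∀ k, ‖∑ i ∈ Finset.range k, m i ∘L adjoint (m i)‖ ≤ 1)

theorem tendsto_sum_comp_lpProj {T : K₁ →L[ℂ] lp (fun _ : ℕ => G) 2} {S : K₁ →L[ℂ] K₁}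
    (hS : Tendsto (fun n => ∑ i ∈ Finset.range n,
      adjoint (lpProj G i ∘L T) ∘L (lpProj G i ∘L T)) atTop (𝓝 S)) :
    Tendsto (fun k => ∑ i ∈ Finset.range k, m i ∘L (lpProj G i ∘L T)) atTop
      (𝓝 (adjoint (colOp m hcontr) ∘L T)) := by
  rw [← tendsto_sub_nhds_zero_iff]
  refine tendsto_zero_of_norm_apply_sq_le (c := fun k => ‖S - ∑ i ∈ Finset.range k,
    adjoint (lpProj G i ∘L T) ∘L (lpProj G i ∘L T)‖) ?_ fun k x => ?_
  · simpa [norm_sub_rev] using tendsto_iff_norm_sub_tendsto_zero.1 hS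
  have htail :
      ‖(∑ i ∈ Finset.range k, m i ∘L (lpProj G i ∘L T) - adjoint (colOp m hcontr) ∘L T) x‖ =
        ‖adjoint (colOp m hcontr) (T x - ∑ i ∈ Finset.range k, lp.single 2 i (T x i))‖ := by
    rw [← adjoint_colOp_sub_sum_range, norm_sub_rev]
    simp [sum_apply]
  calc _ = ‖adjoint (colOp m hcontr) (T x - ∑ i ∈ Finset.range k, lp.single 2 i (T x i))‖ ^ 2 :=
        by rw [htail]
    _ ≤ ‖T x - ∑ i ∈ Finset.range k, lp.single 2 i (T x i)‖ ^ 2 := by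
        gcongr
        simpa only [one_mul] using
          (adjoint (colOp m hcontr)).le_of_opNorm_le (norm_adjoint_colOp_le hcontr) _
    _ = RCLike.re ⟪(S - ∑ i ∈ Finset.range k,
          adjoint (lpProj G i ∘L T) ∘L (lpProj G i ∘L T)) x, x⟫_ℂ := by
        rw [lp.norm_sub_sum_single_sq, norm_sq_apply_eq_re_inner_of_tendsto hS, sub_apply,
          inner_sub_left, map_sub, re_inner_sum_adjoint_comp_self_apply]
        rfl
    _ ≤ _ := re_inner_apply_self_le _ x

theorem colOp_comp_mem_colInf {Y : Set (K₁ →L[ℂ] G)} {z : K₁ →L[ℂ] K₂}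
    (hY : ∀ i, adjoint (m i) ∘L z ∈ Y)
    (hz : Tendsto (fun k => (∑ i ∈ Finset.range k, m i ∘L adjoint (m i)) ∘L z) atTop (𝓝 z)) :
    colOp m hcontr ∘L z ∈ ColInf Y := by
  refine ⟨fun i => by rw [← comp_assoc, lpProj_comp_colOp]; exact hY i, adjoint z ∘L z, ?_⟩
  have hgram : ∀ k, ∑ i ∈ Finset.range k, adjoint (lpProj G i ∘L (colOp m hcontr ∘L z)) ∘L
      (lpProj G i ∘L (colOp m hcontr ∘L z)) =
        adjoint z ∘L ((∑ i ∈ Finset.range k, m i ∘L adjoint (m i)) ∘L z) := fun k => by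
    simp only [← comp_assoc, lpProj_comp_colOp, adjoint_comp, adjoint_adjoint]
    ext x
    simp [sum_apply]
  simpa only [hgram, Function.comp_def, compL_apply] using
    ((compL ℂ K₁ K₂ K₁ (adjoint z)).continuous.tendsto z).comp hz

theorem adjoint_colOp_comp_mem {p : Submodule ℂ (K₁ →L[ℂ] K₂)}
    (hp : IsClosed (p : Set (K₁ →L[ℂ] K₂)))
    {T : K₁ →L[ℂ] lp (fun _ : ℕ => G) 2} (hT : ∀ i, m i ∘L (lpProj G i ∘L T) ∈ p)
    {S : K₁ →L[ℂ] K₁} (hS : Tendsto (fun n => ∑ i ∈ Finset.range n,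
      adjoint (lpProj G i ∘L T) ∘L (lpProj G i ∘L T)) atTop (𝓝 S)) :
    adjoint (colOp m hcontr) ∘L T ∈ p :=
  hp.mem_of_tendsto (tendsto_sum_comp_lpProj hcontr hS)
    (Eventually.of_forall fun _ => p.sum_mem fun i _ => hT i)

end ColumnSpace

theorem adjoint_comp_sub_eq_zero_of_adjoint_comp_comp {E F L : Type*}
    [NormedAddCommGroup E] [InnerProductSpace ℂ E] [CompleteSpace E]
    [NormedAddCommGroup F] [InnerProductSpace ℂ F] [CompleteSpace F]
    [NormedAddCommGroup L] [InnerProductSpace ℂ L] [CompleteSpace L]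
    {C : F →L[ℂ] L} {T : E →L[ℂ] L}
    (h : adjoint C ∘L (C ∘L (adjoint C ∘L T)) = adjoint C ∘L T) :
    adjoint (C ∘L (adjoint C ∘L T)) ∘L (T - C ∘L (adjoint C ∘L T)) = 0 := by
  rw [adjoint_comp, comp_assoc, comp_sub, h, sub_self, comp_zero]

theorem column_space_absorption_general
    {K₁ K₂ G : Type*} [NormedAddCommGroup K₁] [InnerProductSpace ℂ K₁] [CompleteSpace K₁]
    [NormedAddCommGroup K₂] [InnerProductSpace ℂ K₂] [CompleteSpace K₂]
    [NormedAddCommGroup G] [InnerProductSpace ℂ G] [CompleteSpace G]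
    (Z : Set (K₁ →L[ℂ] K₂)) (hZ : IsOperatorSpace Z)
    (M : Set (G →L[ℂ] K₂))
    (Y : Set (K₁ →L[ℂ] G)) (hY : Y = clSpan (setMul (adjSet M) Z))
    (hMY : setMul M Y ⊆ Z)
    (m : ℕ → (G →L[ℂ] K₂)) (hm : ∀ i, m i ∈ M)
    (hcontr : ∀ k,
      ‖∑ i ∈ Finset.range k, (m i).comp (ContinuousLinearMap.adjoint (m i))‖ ≤ 1)
    (happrox : ∀ z ∈ Z, Tendsto (fun k =>
      (∑ i ∈ Finset.range k, (m i).comp (ContinuousLinearMap.adjoint (m i))).comp z)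
      atTop (nhds z)) :
    ∃ (φ : (K₁ →L[ℂ] K₂) →ₗ[ℂ] (K₁ →L[ℂ] lp (fun _ : ℕ => G) 2))
      (ψ : (K₁ →L[ℂ] lp (fun _ : ℕ => G) 2) →ₗ[ℂ] (K₁ →L[ℂ] K₂)),
      -- `φ(z) = [mᵢ* z]` maps `Z` into `C_∞(Y)` and is a complete isometry
      (∀ z ∈ Z, ∀ i, (lpProj G i).comp (φ z) = (ContinuousLinearMap.adjoint (m i)).comp z) ∧
      (∀ z ∈ Z, φ z ∈ ColInf Y) ∧
      CompletelyIsometricOn φ Z ∧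
      -- `ψ([yᵢ]) = Σ mᵢ yᵢ` is a complete contraction of `C_∞(Y)` onto `Z`
      (∀ T ∈ ColInf Y, Tendsto
        (fun k => ∑ i ∈ Finset.range k, (m i).comp ((lpProj G i).comp T))
        atTop (nhds (ψ T))) ∧
      CompletelyContractiveOn ψ (ColInf Y) ∧
      ψ '' ColInf Y = Z ∧
      -- `ψ ∘ φ = id_Z`
      (∀ z ∈ Z, ψ (φ z) = z) ∧
      -- orthogonal decomposition `C_∞(Y) = φ(Z) ⊕^⊥ ran(1 - p)` for `p = φ ∘ ψ`
      (∀ T ∈ ColInf Y, φ (ψ T) ∈ φ '' Z ∧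
        (ContinuousLinearMap.adjoint (φ (ψ T))).comp (T - φ (ψ T)) = 0) := by
  obtain ⟨hZclosed, p, rfl⟩ := hZ
  set C := colOp m hcontr
  have hψφ : ∀ z ∈ (p : Set (K₁ →L[ℂ] K₂)), adjoint C ∘L (C ∘L z) = z := fun z hz =>
    adjoint_colOp_comp_colOp_comp hcontr (happrox z hz)
  have hφ : ∀ z ∈ (p : Set (K₁ →L[ℂ] K₂)), C ∘L z ∈ ColInf Y := fun z hz =>
    colOp_comp_mem_colInf hcontr (fun i => hY ▸ subset_closure
      (Submodule.subset_span ⟨adjoint (m i), ⟨m i, hm i, rfl⟩, z, hz, rfl⟩)) (happrox z hz)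
  have hψ : ∀ T ∈ ColInf Y, adjoint C ∘L T ∈ p := fun T ⟨hTY, _, hS⟩ =>
    adjoint_colOp_comp_mem hcontr hZclosed (fun i => hMY ⟨m i, hm i, _, hTY i, rfl⟩) hS
  refine ⟨compL ℂ K₁ K₂ _ C, compL ℂ K₁ _ K₂ (adjoint C), fun _ _ _ => rfl, hφ,
    completelyIsometricOn_compL (norm_colOp_le hcontr) (norm_adjoint_colOp_le hcontr) hψφ,
    fun T ⟨_, _, hS⟩ => tendsto_sum_comp_lpProj hcontr hS,
    completelyContractiveOn_compL (norm_adjoint_colOp_le hcontr) _,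
    (Set.image_subset_iff.2 hψ).antisymm fun z hz => ⟨C ∘L z, hφ z hz, hψφ z hz⟩, hψφ,
    fun T hT => ⟨⟨_, hψ T hT, rfl⟩,
      adjoint_comp_sub_eq_zero_of_adjoint_comp_comp (hψφ _ (hψ T hT))⟩⟩

/-- If `Y = cl span(M* Z)` for a TRO `M` with a σ-unit sequence `(mᵢ)`,
then `φ(z) = [mᵢ* z]` is a complete isometry of `Z` into `C_∞(Y)`, `ψ([yᵢ]) = Σ mᵢ yᵢ` is a
complete contraction of `C_∞(Y)` onto `Z` with `ψ ∘ φ = id_Z`, and `C_∞(Y)` decomposes as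
`φ(Z)` plus an orthogonal complement via the idempotent `p = φ ∘ ψ`. -/
theorem column_space_absorption
    {K₁ K₂ G : Type*} [NormedAddCommGroup K₁] [InnerProductSpace ℂ K₁] [CompleteSpace K₁]
    [NormedAddCommGroup K₂] [InnerProductSpace ℂ K₂] [CompleteSpace K₂]
    [NormedAddCommGroup G] [InnerProductSpace ℂ G] [CompleteSpace G]
    (Z : Set (K₁ →L[ℂ] K₂)) (hZ : IsOperatorSpace Z)
    (M : Set (G →L[ℂ] K₂)) (hM : IsTRO M)
    (Y : Set (K₁ →L[ℂ] G)) (hY : Y = clSpan (setMul (adjSet M) Z))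
    (hMY : setMul M Y ⊆ Z)
    (m : ℕ → (G →L[ℂ] K₂)) (hm : ∀ i, m i ∈ M)
    (hcontr : ∀ k,
      ‖∑ i ∈ Finset.range k, (m i).comp (ContinuousLinearMap.adjoint (m i))‖ ≤ 1)
    (happrox : ∀ z ∈ Z, Tendsto (fun k =>
      (∑ i ∈ Finset.range k, (m i).comp (ContinuousLinearMap.adjoint (m i))).comp z)
      atTop (nhds z)) :
    ∃ (φ : (K₁ →L[ℂ] K₂) →ₗ[ℂ] (K₁ →L[ℂ] lp (fun _ : ℕ => G) 2))
      (ψ : (K₁ →L[ℂ] lp (fun _ : ℕ => G) 2) →ₗ[ℂ] (K₁ →L[ℂ] K₂)),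
      -- `φ(z) = [mᵢ* z]` maps `Z` into `C_∞(Y)` and is a complete isometry
      (∀ z ∈ Z, ∀ i, (lpProj G i).comp (φ z) = (ContinuousLinearMap.adjoint (m i)).comp z) ∧
      (∀ z ∈ Z, φ z ∈ ColInf Y) ∧
      CompletelyIsometricOn φ Z ∧
      -- `ψ([yᵢ]) = Σ mᵢ yᵢ` is a complete contraction of `C_∞(Y)` onto `Z`
      (∀ T ∈ ColInf Y, Tendsto
        (fun k => ∑ i ∈ Finset.range k, (m i).comp ((lpProj G i).comp T))
        atTop (nhds (ψ T))) ∧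
      CompletelyContractiveOn ψ (ColInf Y) ∧
      ψ '' ColInf Y = Z ∧
      -- `ψ ∘ φ = id_Z`
      (∀ z ∈ Z, ψ (φ z) = z) ∧
      -- orthogonal decomposition `C_∞(Y) = φ(Z) ⊕^⊥ ran(1 - p)` for `p = φ ∘ ψ`
      (∀ T ∈ ColInf Y, φ (ψ T) ∈ φ '' Z ∧
        (ContinuousLinearMap.adjoint (φ (ψ T))).comp (T - φ (ψ T)) = 0) :=
  column_space_absorption_general Z hZ M Y hY hMY m hm hcontr happrox
end
end
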